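/- arXiv:1309.2666 — 2 statements merged into one kernel-verified Lean document; each statement's English description precedes it below -/
import Mathlib

section
/- For x, y, z > 0, define z' ≥ 0 by cosh(z') = coth(x)·coth(y) + cosh(z)/(sinh(x)·sinh(y)). If x, y, z all tend to infinity while remaining within a factor of 3/2 of each other (i.e., x ≤ y ≤ (3/2)x and x ≤ z ≤ (3/2)x), then z' tends to 0. -/
/-! Clearing denominators, `cosh z' - 1 = (cosh (x - y) + cosh z) / (sinh x * sinh y)`, since
`cosh x cosh y - sinh x sinh y = cosh (x - y)`. Under the hypotheses the numerator is at most
`2 exp (3x/2)` while the denominator is at least `exp (2x) / 16`, so `cosh z' - 1 ≤ 32 exp (-x/2)`,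
which tends to `0`. -/

open Real Filter Topology

namespace Real

lemma cosh_sub_one_eq_of_cosh_eq {x y z z' : ℝ} (hx : sinh x ≠ 0) (hy : sinh y ≠ 0)
    (h : cosh z' = cosh x / sinh x * (cosh y / sinh y) + cosh z / (sinh x * sinh y)) :
    cosh z' - 1 = (cosh (x - y) + cosh z) / (sinh x * sinh y) := by
  rw [h, cosh_sub]
  field_simp
  ring

lemma exp_div_four_le_sinh {x : ℝ} (hx : 1 ≤ x) : exp x / 4 ≤ sinh x := by
  have h_two_le_exp : 2 ≤ exp x := by linarith [add_one_le_exp x]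
  have h_exp_neg_le_one : exp (-x) ≤ 1 := exp_le_one_iff.2 (by linarith)
  rw [sinh_eq]
  linarith

lemma cosh_le_exp {x : ℝ} (hx : 0 ≤ x) : cosh x ≤ exp x := by
  rw [cosh_eq]
  linarith [exp_le_exp.2 (show -x ≤ x by linarith)]

lemma cosh_sub_add_cosh_div_le {x y z : ℝ} (hx : 1 ≤ x) (hxy : x ≤ y) (hyx : y ≤ 3 / 2 * x)
    (hxz : x ≤ z) (hzx : z ≤ 3 / 2 * x) :
    (cosh (x - y) + cosh z) / (sinh x * sinh y) ≤ 32 * exp (-(x / 2)) := by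
  have h_cosh_sub : cosh (x - y) ≤ cosh z :=
    cosh_le_cosh.2 (by rw [abs_of_nonpos (by linarith), abs_of_nonneg (by linarith)]; linarith)
  have h_num : cosh (x - y) + cosh z ≤ 2 * exp (3 / 2 * x) := by
    linarith [cosh_le_exp (show 0 ≤ z by linarith), exp_le_exp.2 hzx]
  have h_sinh_x := exp_div_four_le_sinh hx
  have h_sinh_y := h_sinh_x.trans (sinh_le_sinh.2 hxy)
  have h_den : exp x / 4 * (exp x / 4) ≤ sinh x * sinh y :=
    mul_le_mul h_sinh_x h_sinh_y (by positivity) (by linarith [exp_pos x])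
  calc (cosh (x - y) + cosh z) / (sinh x * sinh y)
      ≤ 2 * exp (3 / 2 * x) / (exp x / 4 * (exp x / 4)) :=
        div_le_div₀ (by positivity) h_num (by positivity) h_den
    _ = 32 * exp (-(x / 2)) := by
        rw [show 3 / 2 * x = -(x / 2) + x + x by ring, exp_add, exp_add]
        field_simp
        ring

end Real

theorem stmt_10 :
    ∀ ε : ℝ, 0 < ε → ∃ M : ℝ, ∀ x y z z' : ℝ,
      M ≤ x → x ≤ y → y ≤ (3/2) * x → x ≤ z → z ≤ (3/2) * x → 0 ≤ z' →
      Real.cosh z' = (Real.cosh x / Real.sinh x) * (Real.cosh y / Real.sinh y)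
          + Real.cosh z / (Real.sinh x * Real.sinh y) →
      z' < ε := by
  intro ε hε
  have hδ : 0 < cosh ε - 1 := sub_pos.2 (one_lt_cosh.2 hε.ne')
  have h_tendsto : Tendsto (fun x : ℝ => 32 * exp (-(x / 2))) atTop (𝓝 0) := by
    simpa using (tendsto_exp_atBot.comp (tendsto_neg_atTop_atBot.comp
      (tendsto_id.atTop_div_const (two_pos : (0 : ℝ) < 2)))).const_mul 32
  obtain ⟨M, hM⟩ := eventually_atTop.1
    ((h_tendsto.eventually (gt_mem_nhds hδ)).and (eventually_ge_atTop 1))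
  refine ⟨M, fun x y z z' hMx hxy hyx hxz hzx hz' h => ?_⟩
  obtain ⟨h_small, hx⟩ := hM x hMx
  have h_sinh_x : 0 < sinh x := sinh_pos_iff.2 (by linarith)
  have h_sinh_y : 0 < sinh y := sinh_pos_iff.2 (by linarith)
  have h_cosh : cosh z' < cosh ε := by
    linarith [cosh_sub_one_eq_of_cosh_eq h_sinh_x.ne' h_sinh_y.ne' h,
      cosh_sub_add_cosh_div_le hx hxy hyx hxz hzx]
  simpa [abs_of_nonneg hz', abs_of_pos hε] using cosh_lt_cosh.1 h_cosh
end

section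
/- Suppose |c| > 0, K ≥ 1, |d₁| ≤ (|c| + K²|c|)/2, and |c| ≤ |d₁|·(K/4 + 1/2). Then 1 ≤ (K/4 + 1/2)·(1 + K²)/2, and hence K ≥ 1.218. -/
/-! Chaining the two bounds on `d₁` gives `c ≤ c · (1 + K²)/2 · (K/4 + 1/2)`, and cancelling `c`
gives the first claim, equivalently `K³ + 2K² + K - 6 ≥ 0`. The left side is increasing for
`K ≥ 0` and negative at `1.218` (its real root is `≈ 1.2183`), whence the bound on `K`. -/

theorem one_le_mul_of_le_mul_of_le_mul {α : Type*} [Field α] [LinearOrder α]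
    [IsStrictOrderedRing α] {a b c d : α} (hc : 0 < c) (ha : 0 ≤ a)
    (hd : d ≤ c * b) (h : c ≤ d * a) : 1 ≤ a * b := by
  have : c * 1 ≤ c * (a * b) :=
    calc c * 1 = c := mul_one c
      _ ≤ d * a := h
      _ ≤ c * b * a := mul_le_mul_of_nonneg_right hd ha
      _ = c * (a * b) := by ring
  exact le_of_mul_le_mul_left this hc

theorem le_of_eight_le_add_two_mul_one_add_sq {K : ℝ} (hK : 0 ≤ K)
    (h : 8 ≤ (K + 2) * (1 + K ^ 2)) : 1.218 ≤ K := by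
  by_contra! hlt
  have hmono : (K + 2) * (1 + K ^ 2) < (1.218 + 2) * (1 + 1.218 ^ 2) := by
    gcongr
  norm_num at hmono
  linarith

theorem stmt_15 (c K d₁ : ℝ) (hc : 0 < c) (hK : 1 ≤ K)
    (hd₁ : d₁ ≤ (c + K ^ 2 * c) / 2) (h : c ≤ d₁ * (K / 4 + 1 / 2)) :
    1 ≤ (K / 4 + 1 / 2) * (1 + K ^ 2) / 2 ∧ K ≥ 1.218 := by
  have hd₁' : d₁ ≤ c * ((1 + K ^ 2) / 2) := by linarith
  have key : 1 ≤ (K / 4 + 1 / 2) * ((1 + K ^ 2) / 2) :=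
    one_le_mul_of_le_mul_of_le_mul hc (by linarith) hd₁' h
  refine ⟨by linarith, le_of_eight_le_add_two_mul_one_add_sq (by linarith) ?_⟩
  linarith
end
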